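/- Suppose the correlation matrices are identity: R_{I,k} = R_{I,E} = I_N and R_{B,k} = R_{B,E} = I_M. Then for any unitary diagonal Φ, R_k = β_{2,k} I_M + β_{I,k} H₁ H₁^H is independent of Φ; in particular, tr(R_k) = β_{2,k} M + β_{I,k} tr(H₁ H₁^H) and tr(R_k R_i) = β_{2,k}β_{2,i} M + (β_{2,k}β_{I,i} + β_{I,k}β_{2,i}) tr(H₁ H₁^H) + β_{I,k}β_{I,i} tr((H₁ H₁^H)²), none of which depend on Φ. -/

import Mathlib

open Matrix Complex

/-! A diagonal matrix with unit-modulus entries is unitary, so `H Φ Φᴴ Hᴴ = H Hᴴ`; the trace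
formulas then follow from linearity of the trace. -/

theorem Matrix.diagonal_mem_unitaryGroup {n 𝕜 : Type*} [Fintype n] [DecidableEq n] [RCLike 𝕜]
    {φ : n → 𝕜} (hφ : ∀ i, ‖φ i‖ = 1) : diagonal φ ∈ unitaryGroup n 𝕜 := by
  rw [mem_unitaryGroup_iff, star_eq_conjTranspose, diagonal_conjTranspose, diagonal_mul_diagonal,
    ← diagonal_one]
  congr 1
  funext i
  simp [RCLike.mul_conj, hφ i]

theorem Matrix.mul_mul_conjTranspose_of_mem_unitaryGroup {m n α : Type*} [Fintype n]
    [DecidableEq n] [CommRing α] [StarRing α] (H : Matrix m n α) {U : Matrix n n α}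
    (hU : U ∈ unitaryGroup n α) : H * U * Uᴴ * Hᴴ = H * Hᴴ := by
  rw [Matrix.mul_assoc H, ← star_eq_conjTranspose, mem_unitaryGroup_iff.mp hU, Matrix.mul_one]

section TraceOfAffineCombination

variable {n α : Type*} [Fintype n] [DecidableEq n] [CommSemiring α]

theorem Matrix.trace_smul_one_add_smul (a b : α) (G : Matrix n n α) :
    (a • (1 : Matrix n n α) + b • G).trace = a * Fintype.card n + b * G.trace := by
  simp [trace_add, trace_smul, trace_one]

theorem Matrix.trace_mul_smul_one_add_smul (a b c d : α) (G : Matrix n n α) :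
    ((a • (1 : Matrix n n α) + b • G) * (c • 1 + d • G)).trace
      = a * c * Fintype.card n + (a * d + b * c) * G.trace + b * d * (G * G).trace := by
  simp only [Matrix.add_mul, Matrix.mul_add, Matrix.smul_mul, Matrix.mul_smul, Matrix.one_mul,
    Matrix.mul_one, trace_add, trace_smul, trace_one, smul_eq_mul]
  ring

end TraceOfAffineCombination

theorem uncorrelated_rayleigh_phase_independence_general (M N : ℕ)
    (H : Matrix (Fin M) (Fin N) ℂ) (β2k β2i βIk βIi : ℝ)
    (φ : Fin N → ℂ) (hφ : ∀ n, ‖φ n‖ = 1)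
    (Rk Ri : Matrix (Fin M) (Fin M) ℂ)
    (hRk : Rk = (β2k : ℂ) • (1 : Matrix (Fin M) (Fin M) ℂ)
      + (βIk : ℂ) • (H * Matrix.diagonal φ * (1 : Matrix (Fin N) (Fin N) ℂ)
          * (Matrix.diagonal φ)ᴴ * Hᴴ))
    (hRi : Ri = (β2i : ℂ) • (1 : Matrix (Fin M) (Fin M) ℂ)
      + (βIi : ℂ) • (H * Matrix.diagonal φ * (1 : Matrix (Fin N) (Fin N) ℂ)
          * (Matrix.diagonal φ)ᴴ * Hᴴ)) :
    Rk = (β2k : ℂ) • (1 : Matrix (Fin M) (Fin M) ℂ) + (βIk : ℂ) • (H * Hᴴ) ∧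
    Rk.trace = (β2k : ℂ) * M + (βIk : ℂ) * (H * Hᴴ).trace ∧
    (Rk * Ri).trace = (β2k : ℂ) * (β2i : ℂ) * M
      + ((β2k : ℂ) * (βIi : ℂ) + (βIk : ℂ) * (β2i : ℂ)) * (H * Hᴴ).trace
      + (βIk : ℂ) * (βIi : ℂ) * ((H * Hᴴ) * (H * Hᴴ)).trace := by
  have hΦ : H * diagonal φ * (1 : Matrix (Fin N) (Fin N) ℂ) * (diagonal φ)ᴴ * Hᴴ = H * Hᴴ := by
    rw [Matrix.mul_one, mul_mul_conjTranspose_of_mem_unitaryGroup H (diagonal_mem_unitaryGroup hφ)]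
  rw [hΦ] at hRk hRi
  subst hRk hRi
  refine ⟨rfl, ?_, ?_⟩
  · rw [trace_smul_one_add_smul, Fintype.card_fin]
  · rw [trace_mul_smul_one_add_smul, Fintype.card_fin]

/-- Under uncorrelated Rayleigh fading (`R_{I,k} = I_N`, `R_{B,k} = I_M`), for any unitary
diagonal `Φ = diag φ`, the effective covariance
`R_k = β_{2,k} I + β_{I,k} H₁ Φ I Φᴴ H₁ᴴ = β_{2,k} I + β_{I,k} H₁ H₁ᴴ` is independent of `Φ`,
with `tr R_k = β_{2,k} M + β_{I,k} tr(H₁H₁ᴴ)` and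
`tr(R_k R_i) = β_{2,k}β_{2,i} M + (β_{2,k}β_{I,i} + β_{I,k}β_{2,i}) tr(H₁H₁ᴴ)
 + β_{I,k}β_{I,i} tr((H₁H₁ᴴ)²)`. -/
theorem uncorrelated_rayleigh_phase_independence (M N : ℕ)
    (H : Matrix (Fin M) (Fin N) ℂ) (β2k β2i βIk βIi : ℝ)
    (hβ2k : 0 < β2k) (hβ2i : 0 < β2i) (hβIk : 0 < βIk) (hβIi : 0 < βIi)
    (φ : Fin N → ℂ) (hφ : ∀ n, ‖φ n‖ = 1)
    (Rk Ri : Matrix (Fin M) (Fin M) ℂ)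
    (hRk : Rk = (β2k : ℂ) • (1 : Matrix (Fin M) (Fin M) ℂ)
      + (βIk : ℂ) • (H * Matrix.diagonal φ * (1 : Matrix (Fin N) (Fin N) ℂ)
          * (Matrix.diagonal φ)ᴴ * Hᴴ))
    (hRi : Ri = (β2i : ℂ) • (1 : Matrix (Fin M) (Fin M) ℂ)
      + (βIi : ℂ) • (H * Matrix.diagonal φ * (1 : Matrix (Fin N) (Fin N) ℂ)
          * (Matrix.diagonal φ)ᴴ * Hᴴ)) :
    Rk = (β2k : ℂ) • (1 : Matrix (Fin M) (Fin M) ℂ) + (βIk : ℂ) • (H * Hᴴ) ∧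
    Rk.trace = (β2k : ℂ) * M + (βIk : ℂ) * (H * Hᴴ).trace ∧
    (Rk * Ri).trace = (β2k : ℂ) * (β2i : ℂ) * M
      + ((β2k : ℂ) * (βIi : ℂ) + (βIk : ℂ) * (β2i : ℂ)) * (H * Hᴴ).trace
      + (βIk : ℂ) * (βIi : ℂ) * ((H * Hᴴ) * (H * Hᴴ)).trace :=
  uncorrelated_rayleigh_phase_independence_general M N H β2k β2i βIk βIi φ hφ Rk Ri hRk hRi
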